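/- arXiv:math/0606053 — 2 statements merged into one kernel-verified Lean document; each statement's English description precedes it below -/
import Mathlib

section
/- Let n ≥ 4, N = 2n/(n-2), and Ω a smooth bounded open set of ℝⁿ. Let w solve Δw = 1 in Ω with w = 0 on ∂Ω, let 0 < α < 1, and let ε > 0 satisfy ε · (sup_Ω w) ≤ α. Then every solution u of Δu = u^{N-1} + ε u in Ω with u > 0 in Ω and u = 0 on ∂Ω satisfies sup_Ω u ≥ ((1 − α)/(sup_Ω w))^{1/(N-2)}. -/
/-!
Write `M = sup u`, `S = sup w`. Since `0 < u ≤ M`, we have `Δu ≤ L := M^(N-1) + εM` in `Ω`.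
For `δ > 0` the function `u - (L + δ) w` has `Δ < 0` in `Ω` and vanishes on `∂Ω`; as `Δ ≥ 0` at
an interior maximum, it is `≤ 0`. Letting `δ → 0` gives `u ≤ L w`, hence
`M ≤ L S = M^(N-2) S M + εS M ≤ M^(N-2) S M + α M`, and dividing by `M`,
`1 - α ≤ M^(N-2) S`.
-/

open MeasureTheory Metric Set

/-- The geometric Laplacian `Δu = -∑ ∂²u/∂xᵢ²` on `ℝⁿ`. -/
noncomputable def lap {n : ℕ} (u : EuclideanSpace ℝ (Fin n) → ℝ)
    (x : EuclideanSpace ℝ (Fin n)) : ℝ :=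
  -∑ i : Fin n,
    iteratedFDeriv ℝ 2 u x ![EuclideanSpace.single i (1 : ℝ), EuclideanSpace.single i (1 : ℝ)]

/-- `Ω` has smooth (`C^∞`) boundary: near every boundary point, `Ω` is the sublevel
set of a smooth local defining function with nonvanishing differential. -/
def HasSmoothBoundary {n : ℕ} (Ω : Set (EuclideanSpace ℝ (Fin n))) : Prop :=
  ∀ x ∈ frontier Ω, ∃ (U : Set (EuclideanSpace ℝ (Fin n))) (f : EuclideanSpace ℝ (Fin n) → ℝ),
    IsOpen U ∧ x ∈ U ∧ ContDiff ℝ (⊤ : ℕ∞) f ∧ (∀ y ∈ U, fderiv ℝ f y ≠ 0) ∧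
    Ω ∩ U = {y | y ∈ U ∧ f y < 0}

/-- `u` is a solution of `Δu = u^p` in `Ω`, positive in `Ω`, vanishing on `∂Ω`,
of class `C²(Ω) ∩ C(closure Ω)`. -/
def IsSolution {n : ℕ} (Ω : Set (EuclideanSpace ℝ (Fin n)))
    (u : EuclideanSpace ℝ (Fin n) → ℝ) (p : ℝ) : Prop :=
  ContDiffOn ℝ 2 u Ω ∧ ContinuousOn u (closure Ω) ∧
  (∀ x ∈ Ω, lap u x = u x ^ p) ∧ (∀ x ∈ Ω, 0 < u x) ∧ (∀ x ∈ frontier Ω, u x = 0)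

open Filter Topology

theorem IsLocalMax.deriv_deriv_nonpos {g : ℝ → ℝ} {t : ℝ} (hmax : IsLocalMax g t)
    (hc : ContinuousAt g t) : deriv (deriv g) t ≤ 0 := by
  by_contra! hpos
  have hmin : IsLocalMin g t := isLocalMin_of_deriv_deriv_pos hpos hmax.deriv_eq_zero hc
  have hconst : g =ᶠ[𝓝 t] fun _ => g t :=
    (hmax.and hmin).mono fun s hs => le_antisymm hs.1 hs.2
  rw [hconst.deriv.deriv_eq] at hpos
  simp at hpos

theorem IsLocalMax.iteratedFDeriv_two_apply_nonpos {E : Type*} [NormedAddCommGroup E]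
    [NormedSpace ℝ E] {f : E → ℝ} {x : E} (hmax : IsLocalMax f x) (hf : ContDiffAt ℝ 2 f x)
    (y : E) : iteratedFDeriv ℝ 2 f x (fun _ => y) ≤ 0 := by
  set line : ℝ → E := fun s => x + s • y
  have hline : ContinuousAt line 0 := by fun_prop
  have hline0 : line 0 = x := by simp [line]
  have hnear : ∀ᶠ s in 𝓝 (0 : ℝ), ContDiffAt ℝ 2 f (line s) :=
    hline.tendsto.eventually (hline0 ▸ hf.eventually (by simp))
  have hderiv :
      deriv (f ∘ line) =ᶠ[𝓝 0] fun s => iteratedFDeriv ℝ 1 f (line s) (fun _ => y) := by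
    filter_upwards [hnear] with s hs
    simpa [line, Function.comp_def] using
      (hs.of_le one_le_two).deriv_fderiv_add_smul (n := 0)
  have hsecond : deriv (deriv (f ∘ line)) 0 = iteratedFDeriv ℝ 2 f x (fun _ => y) := by
    have hf' : ContDiffAt ℝ (1 + 1) f (line 0) := by rw [hline0]; exact hf
    rw [hderiv.deriv_eq, ← hline0]
    exact hf'.deriv_fderiv_add_smul
  rw [← hsecond]
  exact IsLocalMax.deriv_deriv_nonpos ((hline0 ▸ hmax).comp_continuous hline)
    ((hline0 ▸ hf.continuousAt).comp hline)

variable {n : ℕ}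

theorem lap_nonneg_of_isLocalMax {f : EuclideanSpace ℝ (Fin n) → ℝ}
    {x : EuclideanSpace ℝ (Fin n)} (hmax : IsLocalMax f x) (hf : ContDiffAt ℝ 2 f x) :
    0 ≤ lap f x := by
  rw [lap, neg_nonneg]
  refine Finset.sum_nonpos fun i _ => ?_
  simpa [iteratedFDeriv_two_apply] using
    hmax.iteratedFDeriv_two_apply_nonpos hf (EuclideanSpace.single i 1)

theorem lap_sub_const_mul {u w : EuclideanSpace ℝ (Fin n) → ℝ} {x : EuclideanSpace ℝ (Fin n)}
    (c : ℝ) (hu : ContDiffAt ℝ 2 u x) (hw : ContDiffAt ℝ 2 w x) :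
    lap (fun y => u y - c * w y) x = lap u x - c * lap w x := by
  simp only [lap, ← smul_eq_mul (a := c),
    fun_iteratedFDeriv_sub_apply hu (hw.const_smul c), iteratedFDeriv_const_smul_apply' hw]
  simp only [sub_apply, smul_apply, smul_eq_mul, Finset.sum_sub_distrib, ← Finset.mul_sum]
  ring

variable {Ω : Set (EuclideanSpace ℝ (Fin n))}

theorem nonpos_of_lap_neg (hΩo : IsOpen Ω) (hΩb : Bornology.IsBounded Ω)
    {v : EuclideanSpace ℝ (Fin n) → ℝ} (hv2 : ContDiffOn ℝ 2 v Ω)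
    (hvc : ContinuousOn v (closure Ω)) (hlap : ∀ x ∈ Ω, lap v x < 0)
    (hfr : ∀ x ∈ frontier Ω, v x ≤ 0) : ∀ x ∈ Ω, v x ≤ 0 := by
  intro x hx
  obtain ⟨x₀, hx₀, hmax⟩ :=
    hΩb.isCompact_closure.exists_isMaxOn ⟨x, subset_closure hx⟩ hvc
  refine (hmax (subset_closure hx)).trans ?_
  by_cases hin : x₀ ∈ Ω
  · have hnhds : Ω ∈ 𝓝 x₀ := hΩo.mem_nhds hin
    have := lap_nonneg_of_isLocalMax (hmax.isLocalMax (mem_of_superset hnhds subset_closure))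
      (hv2.contDiffAt hnhds)
    linarith [hlap x₀ hin]
  · exact hfr x₀ (by rw [hΩo.frontier_eq]; exact ⟨hx₀, hin⟩)

theorem le_const_mul_of_lap_le (hΩo : IsOpen Ω) (hΩb : Bornology.IsBounded Ω)
    {u w : EuclideanSpace ℝ (Fin n) → ℝ} {c : ℝ}
    (hu2 : ContDiffOn ℝ 2 u Ω) (huc : ContinuousOn u (closure Ω))
    (hw2 : ContDiffOn ℝ 2 w Ω) (hwc : ContinuousOn w (closure Ω))
    (hlapu : ∀ x ∈ Ω, lap u x ≤ c) (hlapw : ∀ x ∈ Ω, lap w x = 1)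
    (hub : ∀ x ∈ frontier Ω, u x ≤ 0) (hwb : ∀ x ∈ frontier Ω, w x = 0) :
    ∀ x ∈ Ω, u x ≤ c * w x := by
  intro x hx
  have hδ : ∀ δ > 0, u x ≤ (c + δ) * w x := by
    intro δ hδ
    have := nonpos_of_lap_neg hΩo hΩb (v := fun y => u y - (c + δ) * w y)
      (hu2.sub (contDiffOn_const.mul hw2)) (huc.sub (continuousOn_const.mul hwc))
      (fun y hy => by
        have hnhds := hΩo.mem_nhds hy
        rw [lap_sub_const_mul _ (hu2.contDiffAt hnhds) (hw2.contDiffAt hnhds), hlapw y hy]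
        linarith [hlapu y hy])
      (fun y hy => by simp [hub y hy, hwb y hy]) x hx
    linarith
  have htend : Tendsto (fun δ => (c + δ) * w x) (𝓝[>] 0) (𝓝 (c * w x)) :=
    (Continuous.tendsto' (by fun_prop) 0 _ (by simp)).mono_left nhdsWithin_le_nhds
  exact ge_of_tendsto htend (eventually_nhdsWithin_of_forall hδ)

theorem bddAbove_image_of_continuousOn_closure (hΩb : Bornology.IsBounded Ω)
    {f : EuclideanSpace ℝ (Fin n) → ℝ} (hf : ContinuousOn f (closure Ω)) : BddAbove (f '' Ω) :=
  (hΩb.isCompact_closure.image_of_continuousOn hf).bddAbove.mono (image_mono subset_closure)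

theorem sSup_image_le_mul_sSup_image_of_lap_le (hΩo : IsOpen Ω) (hΩb : Bornology.IsBounded Ω)
    (hΩ : Ω.Nonempty) {u w : EuclideanSpace ℝ (Fin n) → ℝ} {c : ℝ} (hc : 0 ≤ c)
    (hu2 : ContDiffOn ℝ 2 u Ω) (huc : ContinuousOn u (closure Ω))
    (hw2 : ContDiffOn ℝ 2 w Ω) (hwc : ContinuousOn w (closure Ω))
    (hlapu : ∀ x ∈ Ω, lap u x ≤ c) (hlapw : ∀ x ∈ Ω, lap w x = 1)
    (hub : ∀ x ∈ frontier Ω, u x ≤ 0) (hwb : ∀ x ∈ frontier Ω, w x = 0) :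
    sSup (u '' Ω) ≤ c * sSup (w '' Ω) := by
  refine csSup_le (hΩ.image u) (forall_mem_image.2 fun x hx => ?_)
  calc u x ≤ c * w x :=
        le_const_mul_of_lap_le hΩo hΩb hu2 huc hw2 hwc hlapu hlapw hub hwb x hx
    _ ≤ c * sSup (w '' Ω) := mul_le_mul_of_nonneg_left
        (le_csSup (bddAbove_image_of_continuousOn_closure hΩb hwc) (mem_image_of_mem w hx)) hc

theorem rpow_one_div_le_of_le_rpow_mul {a M S p : ℝ} (ha : 0 < a) (hM : 0 < M) (hp : 0 < p)
    (h : a ≤ M ^ p * S) : (a / S) ^ (1 / p) ≤ M := by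
  have hS : 0 < S := pos_of_mul_pos_right (ha.trans_le h) (by positivity)
  rw [one_div, Real.rpow_inv_le_iff_of_pos (by positivity) hM.le hp, div_le_iff₀ hS]
  exact h

theorem stmt_5_general {n : ℕ} (hn : 4 ≤ n) (Ω : Set (EuclideanSpace ℝ (Fin n)))
    (hΩo : IsOpen Ω) (hΩb : Bornology.IsBounded Ω)
    (w : EuclideanSpace ℝ (Fin n) → ℝ)
    (hw2 : ContDiffOn ℝ 2 w Ω) (hwc : ContinuousOn w (closure Ω))
    (hweq : ∀ x ∈ Ω, lap w x = 1) (hwb : ∀ x ∈ frontier Ω, w x = 0)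
    (α : ℝ) (hα1 : α < 1)
    (ε : ℝ) (hε0 : 0 < ε) (hεα : ε * sSup (w '' Ω) ≤ α) :
    ∀ u : EuclideanSpace ℝ (Fin n) → ℝ,
      ContDiffOn ℝ 2 u Ω → ContinuousOn u (closure Ω) →
      (∀ x ∈ Ω, lap u x = u x ^ (2 * (n : ℝ) / ((n : ℝ) - 2) - 1) + ε * u x) →
      (∀ x ∈ Ω, 0 < u x) → (∀ x ∈ frontier Ω, u x = 0) →
      ((1 - α) / sSup (w '' Ω)) ^ (1 / (2 * (n : ℝ) / ((n : ℝ) - 2) - 2)) ≤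
        sSup (u '' Ω) := by
  intro u hu2 huc hueq hupos hub
  set N : ℝ := 2 * (n : ℝ) / ((n : ℝ) - 2)
  have hN2 : 0 < N - 2 := by
    have hn2 : (2 : ℝ) < n := by exact_mod_cast (show 2 < n by omega)
    rw [sub_pos, lt_div_iff₀ (by linarith)]
    linarith
  rcases Ω.eq_empty_or_nonempty with rfl | ⟨x₁, hx₁⟩
  · -- `sSup ∅ = 0` in `ℝ`, so both sides are `0`.
    simp [Real.zero_rpow (inv_pos.mpr hN2).ne']
  set M := sSup (u '' Ω)
  set S := sSup (w '' Ω)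
  have hule : ∀ x ∈ Ω, u x ≤ M := fun x hx =>
    le_csSup (bddAbove_image_of_continuousOn_closure hΩb huc) (mem_image_of_mem u hx)
  have hM : 0 < M := (hupos x₁ hx₁).trans_le (hule x₁ hx₁)
  set L := M ^ (N - 1) + ε * M
  have hlapu : ∀ x ∈ Ω, lap u x ≤ L := fun x hx => by
    rw [hueq x hx]
    exact add_le_add (Real.rpow_le_rpow (hupos x hx).le (hule x hx) (by linarith))
      (mul_le_mul_of_nonneg_left (hule x hx) hε0.le)
  have hMLS : M ≤ L * S := sSup_image_le_mul_sSup_image_of_lap_le hΩo hΩb ⟨x₁, hx₁⟩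
    (by positivity) hu2 huc hw2 hwc hlapu hweq (fun y hy => (hub y hy).le) hwb
  have hLS : L * S = M ^ (N - 2) * S * M + ε * S * M := by
    simp only [L, show N - 1 = N - 2 + 1 by ring, Real.rpow_add_one hM.ne']
    ring
  have hεS : ε * S * M ≤ α * M := mul_le_mul_of_nonneg_right hεα hM.le
  refine rpow_one_div_le_of_le_rpow_mul (by linarith) hM hN2 (le_of_mul_le_mul_right ?_ hM)
  linarith

/-- lower bound `sup_Ω u ≥ ((1-α)/sup_Ω w)^(1/(N-2))` for solutions of
`Δu = u^(N-1) + εu` with `ε · sup_Ω w ≤ α`, where `Δw = 1` in `Ω`, `w = 0` on `∂Ω`. -/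
theorem stmt_5 {n : ℕ} (hn : 4 ≤ n) (Ω : Set (EuclideanSpace ℝ (Fin n)))
    (hΩo : IsOpen Ω) (hΩb : Bornology.IsBounded Ω) (hΩs : HasSmoothBoundary Ω)
    (w : EuclideanSpace ℝ (Fin n) → ℝ)
    (hw2 : ContDiffOn ℝ 2 w Ω) (hwc : ContinuousOn w (closure Ω))
    (hweq : ∀ x ∈ Ω, lap w x = 1) (hwb : ∀ x ∈ frontier Ω, w x = 0)
    (α : ℝ) (hα0 : 0 < α) (hα1 : α < 1)
    (ε : ℝ) (hε0 : 0 < ε) (hεα : ε * sSup (w '' Ω) ≤ α) :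
    ∀ u : EuclideanSpace ℝ (Fin n) → ℝ,
      ContDiffOn ℝ 2 u Ω → ContinuousOn u (closure Ω) →
      (∀ x ∈ Ω, lap u x = u x ^ (2 * (n : ℝ) / ((n : ℝ) - 2) - 1) + ε * u x) →
      (∀ x ∈ Ω, 0 < u x) → (∀ x ∈ frontier Ω, u x = 0) →
      ((1 - α) / sSup (w '' Ω)) ^ (1 / (2 * (n : ℝ) / ((n : ℝ) - 2) - 2)) ≤
        sSup (u '' Ω) :=
  stmt_5_general hn Ω hΩo hΩb w hw2 hwc hweq hwb α hα1 ε hε0 hεα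
end

section
/- Let n ≥ 3, N = 2n/(n-2), Ω a smooth bounded open set of ℝⁿ, y₀ ∈ Ω, μ > 0 with B(y₀, μ) compactly contained in Ω, and let η be a smooth cutoff function with 0 ≤ η ≤ 1, η ≡ 1 on B(y₀, μ/2) and η ≡ 0 outside B(y₀, 2μ/3). Then for every k > 1, every ε ∈ (0, 2/(n-2)], and every solution u of Δu = u^{N-1-ε} in Ω with u > 0 in Ω and u = 0 on ∂Ω, one has, with B₀ = B(y₀, 2μ/3): ((2k−1)/k²) · ‖∇(η u^k)‖²_{L²(B₀)} ≤ ‖u‖^{N−ε−2}_{L^{N−ε}(B₀)} · ‖η u^k‖²_{L^{N−ε}(B₀)} + C(k, η) · ‖u‖^{2k}_{L^{2k}(B₀)}, where C(k, η) = ((2k−2)/(4k²))·‖Δη²‖_∞ + ((2k−1)/k²)·‖∇η‖²_∞ is a constant depending only on k and η. -/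
open MeasureTheory Metric Set

/-!
Green's identity `∫ Δf · g = ∫ ⟪∇f, ∇g⟫`, applied to `u` against `η² u^(2k-1)` and to `η²`
against `u^(2k)`, combines with the pointwise expansion of `‖∇(η uᵏ)‖²` into
`((2k-1)/k²) ∫ ‖∇(η uᵏ)‖² = ∫ Δu · η² u^(2k-1) + ((2k-2)/(4k²)) ∫ Δ(η²) u^(2k)
  + ((2k-1)/k²) ∫ ‖∇η‖² u^(2k)`.
With `q = N - ε > 2` the equation turns the first term into `∫ u^(q-2) (η uᵏ)²`, which Hölder's
inequality with exponents `q/(q-2)` and `q/2` bounds by the product of norms; the other two terms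
are bounded by the sup norms of `Δ(η²)` and `∇η`. Everything is integrated over the closed ball,
which differs from the open one by a null set.
-/

open Filter InnerProductSpace
open scoped Gradient RealInnerProductSpace Topology

section Gradient

variable {F : Type*} [NormedAddCommGroup F] [InnerProductSpace ℝ F] [CompleteSpace F]
  {f g : F → ℝ} {x : F}

theorem norm_gradient (f : F → ℝ) (x : F) : ‖∇ f x‖ = ‖fderiv ℝ f x‖ :=
  (toDual ℝ F).symm.norm_map _

theorem gradient_fun_mul (hf : DifferentiableAt ℝ f x) (hg : DifferentiableAt ℝ g x) :
    ∇ (fun y => f y * g y) x = f x • ∇ g x + g x • ∇ f x := by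
  simp only [gradient, fderiv_fun_mul hf hg, map_add, map_smul]

theorem gradient_fun_rpow_const (hf : DifferentiableAt ℝ f x) (hx : f x ≠ 0) (p : ℝ) :
    ∇ (fun y => f y ^ p) x = (p * f x ^ (p - 1)) • ∇ f x := by
  simp only [gradient, (hf.hasFDerivAt.rpow_const (Or.inl hx)).fderiv, map_smul]

theorem gradient_fun_sq (hf : DifferentiableAt ℝ f x) :
    ∇ (fun y => f y ^ 2) x = (2 * f x) • ∇ f x := by
  simp only [pow_two, gradient_fun_mul hf hf, ← add_smul, two_mul]

theorem ContDiffOn.continuousOn_gradient {s : Set F} (hf : ContDiffOn ℝ 1 f s) (hs : IsOpen s) :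
    ContinuousOn (∇ f) s :=
  (toDual ℝ F).symm.continuous.comp_continuousOn (hf.continuousOn_fderiv_of_isOpen hs le_rfl)

theorem moser_gradient_identity {η u : F → ℝ} (hη : DifferentiableAt ℝ η x)
    (hu : DifferentiableAt ℝ u x) (hux : 0 < u x) {k : ℝ} (hk : k ≠ 0) :
    (2 * k - 1) / k ^ 2 * ‖∇ (fun y => η y * u y ^ k) x‖ ^ 2 =
      ⟪∇ u x, ∇ (fun y => η y ^ 2 * u y ^ (2 * k - 1)) x⟫ +
        (2 * k - 2) / (4 * k ^ 2) * ⟪∇ (fun y => η y ^ 2) x, ∇ (fun y => u y ^ (2 * k)) x⟫ +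
        (2 * k - 1) / k ^ 2 * (‖∇ η x‖ ^ 2 * u x ^ (2 * k)) := by
  have hpow : ∀ p : ℝ, DifferentiableAt ℝ (fun y => u y ^ p) x := fun p =>
    hu.rpow_const (Or.inl hux.ne')
  rw [gradient_fun_mul hη (hpow k), gradient_fun_mul (f := fun y => η y ^ 2) (hη.pow 2) (hpow _),
    gradient_fun_sq hη, gradient_fun_rpow_const hu hux.ne', gradient_fun_rpow_const hu hux.ne',
    gradient_fun_rpow_const hu hux.ne']
  simp only [norm_add_sq_real, norm_smul, inner_add_right, real_inner_smul_left,
    real_inner_smul_right, smul_smul, mul_pow, real_inner_self_eq_norm_sq, Real.norm_eq_abs, sq_abs]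
  have h2k2 : u x ^ (2 * k - 1 - 1) = u x ^ (k - 1) * u x ^ (k - 1) := by
    rw [← Real.rpow_add hux]; ring_nf
  have h2k1 : u x ^ (2 * k - 1) = u x ^ (k - 1) * u x ^ k := by
    rw [← Real.rpow_add hux]; ring_nf
  have h2k : u x ^ (2 * k) = u x ^ k * u x ^ k := by
    rw [← Real.rpow_add hux]; ring_nf
  have hk1 : u x ^ (k - 1) = u x ^ k / u x := by
    rw [Real.rpow_sub_one hux.ne']
  rw [h2k2, h2k1, h2k, hk1, real_inner_comm (∇ η x)]
  field_simp
  ring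

end Gradient

section CompactSupport

variable {E G : Type*} [NormedAddCommGroup E] [NormedSpace ℝ E]
  [NormedAddCommGroup G] [NormedSpace ℝ G] {Ω K : Set E} {f : E → G}

theorem contDiff_of_contDiffOn_of_eq_zero_off {m : WithTop ℕ∞} (hΩ : IsOpen Ω) (hK : IsClosed K)
    (hKΩ : K ⊆ Ω) (hf : ContDiffOn ℝ m f Ω) (h0 : ∀ x ∉ K, f x = 0) : ContDiff ℝ m f := by
  refine contDiff_iff_contDiffAt.2 fun x => ?_
  by_cases hx : x ∈ Ω
  · exact hf.contDiffAt (hΩ.mem_nhds hx)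
  · have hzero : (fun _ => (0 : G)) =ᶠ[𝓝 x] f :=
      eventually_of_mem (hK.isOpen_compl.mem_nhds fun h => hx (hKΩ h)) fun y hy => (h0 y hy).symm
    exact contDiffAt_const.congr_of_eventuallyEq hzero.symm

theorem fderiv_eq_zero_of_eq_zero_off (hK : IsClosed K) (h0 : ∀ x ∉ K, f x = 0) {x : E}
    (hx : x ∉ K) : fderiv ℝ f x = 0 :=
  fderiv_of_notMem_tsupport ℝ fun h =>
    hx (closure_minimal (Function.support_subset_iff'.2 h0) hK h)

variable [MeasurableSpace E] [BorelSpace E] [FiniteDimensional ℝ E] {μ : Measure E}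
  [μ.IsAddHaarMeasure]

theorem integral_fderiv_apply_eq_zero {h : E → ℝ} (hh : ContDiff ℝ 1 h)
    (hc : HasCompactSupport h) (v : E) : ∫ x, fderiv ℝ h x v ∂μ = 0 := by
  -- integration by parts for Lipschitz functions, against the constant `1`
  have hibp := (LipschitzWith.const (1 : ℝ)).integral_lineDeriv_mul_eq (μ := μ)
    (hh.lipschitzWith_of_hasCompactSupport hc one_ne_zero).choose_spec hc (-v)
  have hlin : ∀ x, lineDeriv ℝ h x (- -v) = fderiv ℝ h x v := fun x => by
    rw [((hh.differentiable one_ne_zero) x).lineDeriv_eq_fderiv, neg_neg]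
  have hconst : ∀ x, lineDeriv ℝ (fun _ : E => (1 : ℝ)) x (-v) = 0 := fun x => by
    simp [lineDeriv]
  simp only [hconst, zero_mul, integral_zero, mul_one, hlin] at hibp
  exact hibp.symm

theorem setIntegral_fderiv_mul_eq_neg {f g : E → ℝ} (hΩ : IsOpen Ω) (hK : IsCompact K)
    (hKΩ : K ⊆ Ω) (hf : ContDiffOn ℝ 1 f Ω) (hg : ContDiffOn ℝ 1 g Ω)
    (h0 : (∀ x ∉ K, f x = 0) ∨ ∀ x ∉ K, g x = 0) (v : E) :
    ∫ x in K, fderiv ℝ f x v * g x ∂μ = -∫ x in K, f x * fderiv ℝ g x v ∂μ := by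
  have hoff : ∀ x ∉ K,
      f x * g x = 0 ∧ fderiv ℝ f x v * g x = 0 ∧ f x * fderiv ℝ g x v = 0 := by
    intro x hx
    rcases h0 with h0 | h0 <;>
      simp [h0 x hx, fderiv_eq_zero_of_eq_zero_off hK.isClosed h0 hx]
  have hprod : ContDiff ℝ 1 (fun x => f x * g x) :=
    contDiff_of_contDiffOn_of_eq_zero_off hΩ hK.isClosed hKΩ (hf.mul hg) fun x hx => (hoff x hx).1
  have hderiv : ∀ x, fderiv ℝ (fun y => f y * g y) x v =
      fderiv ℝ f x v * g x + f x * fderiv ℝ g x v := by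
    intro x
    by_cases hx : x ∈ Ω
    · have hd : ∀ {φ : E → ℝ}, ContDiffOn ℝ 1 φ Ω → DifferentiableAt ℝ φ x := fun hφ =>
        (hφ.contDiffAt (hΩ.mem_nhds hx)).differentiableAt one_ne_zero
      rw [fderiv_fun_mul (hd hf) (hd hg)]
      simp only [add_apply, smul_apply, smul_eq_mul]
      ring
    · have hxK : x ∉ K := fun h => hx (hKΩ h)
      rw [fderiv_eq_zero_of_eq_zero_off hK.isClosed (fun y hy => (hoff y hy).1) hxK,
        (hoff x hxK).2.1, (hoff x hxK).2.2]
      simp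
  have hcont : ∀ {φ : E → ℝ}, ContDiffOn ℝ 1 φ Ω → ContinuousOn (fun x => fderiv ℝ φ x v) Ω :=
    fun hφ => (hφ.continuousOn_fderiv_of_isOpen hΩ le_rfl).clm_apply continuousOn_const
  have hint : ∀ {φ : E → ℝ}, ContinuousOn φ Ω → (∀ x ∉ K, φ x = 0) → Integrable φ μ :=
    fun hφ h0 => ((hφ.mono hKΩ).integrableOn_compact hK).integrable_of_forall_notMem_eq_zero h0
  have hint₁ : Integrable (fun x => fderiv ℝ f x v * g x) μ :=
    hint ((hcont hf).mul hg.continuousOn) fun x hx => (hoff x hx).2.1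
  have hint₂ : Integrable (fun x => f x * fderiv ℝ g x v) μ :=
    hint (hf.continuousOn.mul (hcont hg)) fun x hx => (hoff x hx).2.2
  have hsum := integral_fderiv_apply_eq_zero (μ := μ) hprod
    (HasCompactSupport.intro hK fun x hx => (hoff x hx).1) v
  simp only [hderiv, integral_add hint₁ hint₂] at hsum
  rw [setIntegral_eq_integral_of_forall_compl_eq_zero fun x hx => (hoff x hx).2.1,
    setIntegral_eq_integral_of_forall_compl_eq_zero fun x hx => (hoff x hx).2.2]
  linarith

end CompactSupport

theorem setIntegral_mul_le_mul_setIntegral {α : Type*} [MeasurableSpace α] {μ : Measure α}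
    {s : Set α} (hs : MeasurableSet s) {h g : α → ℝ} {M : ℝ} (hM : ∀ x ∈ s, h x ≤ M)
    (hg : ∀ x ∈ s, 0 ≤ g x) (hhg : IntegrableOn (fun x => h x * g x) s μ)
    (hgi : IntegrableOn g s μ) : ∫ x in s, h x * g x ∂μ ≤ M * ∫ x in s, g x ∂μ := by
  rw [← integral_const_mul]
  exact setIntegral_mono_on hhg (hgi.const_mul M) hs fun x hx =>
    mul_le_mul_of_nonneg_right (hM x hx) (hg x hx)

theorem integral_rpow_mul_sq_le {α : Type*} [MeasurableSpace α] {μ : Measure α} {q : ℝ}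
    (hq : 2 < q) {f g : α → ℝ} (hf : 0 ≤ᵐ[μ] f) (hg : 0 ≤ᵐ[μ] g)
    (hfq : MemLp f (ENNReal.ofReal q) μ) (hgq : MemLp g (ENNReal.ofReal q) μ) :
    ∫ x, f x ^ (q - 2) * g x ^ 2 ∂μ ≤
      (∫ x, f x ^ q ∂μ) ^ ((q - 2) / q) * (∫ x, g x ^ q ∂μ) ^ (2 / q) := by
  have hq2 : 0 < q - 2 := by linarith
  have hconj : (q / (q - 2)).HolderConjugate (q / 2) := by
    rw [Real.holderConjugate_iff, inv_div, inv_div, ← add_div, sub_add_cancel,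
      div_self (by linarith)]
    exact ⟨(one_lt_div hq2).2 (by linarith), rfl⟩
  have hpow : ∀ {φ : α → ℝ} {r : ℝ}, 0 < r → 0 ≤ᵐ[μ] φ → MemLp φ (ENNReal.ofReal q) μ →
      MemLp (fun x => φ x ^ r) (ENNReal.ofReal (q / r)) μ := by
    intro φ r hr hφ hφq
    have h := hφq.norm_rpow_div (ENNReal.ofReal r)
    rw [ENNReal.toReal_ofReal hr.le, ← ENNReal.ofReal_div_of_pos hr] at h
    refine h.ae_eq ?_
    filter_upwards [hφ] with x hx
    rw [Real.norm_eq_abs, abs_of_nonneg hx]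
  have hholder := integral_mul_le_Lp_mul_Lq_of_nonneg hconj
    (hf.mono fun x hx => Real.rpow_nonneg hx _) (hg.mono fun x hx => sq_nonneg _)
    (hpow hq2 hf hfq)
    ((hpow two_pos hg hgq).ae_eq (g := fun x => g x ^ 2) (ae_of_all _ fun x => by simp))
  have hf' : ∫ x, (f x ^ (q - 2)) ^ (q / (q - 2)) ∂μ = ∫ x, f x ^ q ∂μ :=
    integral_congr_ae <| by
      filter_upwards [hf] with x hx
      rw [← Real.rpow_mul hx, mul_div_cancel₀ _ hq2.ne']
  have hg' : ∫ x, (g x ^ 2) ^ (q / 2) ∂μ = ∫ x, g x ^ q ∂μ :=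
    integral_congr_ae <| by
      filter_upwards [hg] with x hx
      rw [← Real.rpow_natCast, ← Real.rpow_mul hx, Nat.cast_ofNat, mul_div_cancel₀ _ two_ne_zero]
  rwa [hf', hg', one_div_div, one_div_div] at hholder

theorem addHaar_ball_ae_eq_closedBall {E : Type*} [NormedAddCommGroup E] [NormedSpace ℝ E]
    [MeasurableSpace E] [BorelSpace E] [FiniteDimensional ℝ E] (μ : Measure E)
    [μ.IsAddHaarMeasure] (x : E) {r : ℝ} (hr : r ≠ 0) : ball x r =ᵐ[μ] closedBall x r := by
  rw [ae_eq_set, sdiff_eq_empty.2 ball_subset_closedBall, closedBall_sdiff_ball]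
  exact ⟨measure_empty, Measure.addHaar_sphere_of_ne_zero μ x hr⟩

section Integrals

variable {X : Type*} [TopologicalSpace X] [T2Space X] [MeasurableSpace X]
  [OpensMeasurableSpace X] {μ : Measure X} [IsFiniteMeasureOnCompacts μ] {K : Set X}

theorem ContinuousOn.memLp_restrict_of_isCompact (hK : IsCompact K) {f : X → ℝ}
    (hf : ContinuousOn f K) (p : ENNReal) : MemLp f p (μ.restrict K) := by
  have : IsFiniteMeasure (μ.restrict K) := isFiniteMeasure_restrict.2 hK.measure_lt_top.ne
  obtain ⟨C, hC⟩ := hK.exists_bound_of_continuousOn hf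
  exact MemLp.of_bound (hf.aestronglyMeasurable hK.measurableSet) C
    ((ae_restrict_iff' hK.measurableSet).2 (ae_of_all _ hC))

theorem setIntegral_rpow_mul_sq_le (hK : IsCompact K) {q : ℝ} (hq : 2 < q) {f g : X → ℝ}
    (hf : ContinuousOn f K) (hg : ContinuousOn g K) (hf0 : ∀ x ∈ K, 0 ≤ f x)
    (hg0 : ∀ x ∈ K, 0 ≤ g x) :
    ∫ x in K, f x ^ (q - 2) * g x ^ 2 ∂μ ≤
      (∫ x in K, f x ^ q ∂μ) ^ ((q - 2) / q) * (∫ x in K, g x ^ q ∂μ) ^ (2 / q) :=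
  integral_rpow_mul_sq_le hq ((ae_restrict_iff' hK.measurableSet).2 (ae_of_all _ hf0))
    ((ae_restrict_iff' hK.measurableSet).2 (ae_of_all _ hg0))
    (hf.memLp_restrict_of_isCompact hK _) (hg.memLp_restrict_of_isCompact hK _)

end Integrals

theorem setIntegral_norm_fderiv_sq_mul_le {E : Type*} [NormedAddCommGroup E] [NormedSpace ℝ E]
    [MeasurableSpace E] [OpensMeasurableSpace E] {μ : Measure E} [IsFiniteMeasureOnCompacts μ]
    {K : Set E} {f g : E → ℝ} (hK : IsCompact K) (hf : ContDiff ℝ 1 f) (hfc : HasCompactSupport f)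
    (hg : ContinuousOn g K) (hg0 : ∀ x ∈ K, 0 ≤ g x) :
    ∫ x in K, ‖fderiv ℝ f x‖ ^ 2 * g x ∂μ ≤ (⨆ x, ‖fderiv ℝ f x‖) ^ 2 * ∫ x in K, g x ∂μ := by
  have hcont := (hf.continuous_fderiv one_ne_zero).norm
  have hbdd := hcont.bddAbove_range_of_hasCompactSupport (hfc.fderiv (𝕜 := ℝ)).norm
  exact setIntegral_mul_le_mul_setIntegral hK.measurableSet
    (fun x _ => pow_le_pow_left₀ (norm_nonneg _) (le_ciSup hbdd x) 2) hg0
    (((hcont.pow 2).continuousOn.mul hg).integrableOn_compact hK) (hg.integrableOn_compact hK)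

section Laplacian

variable {n : ℕ} {f g : EuclideanSpace ℝ (Fin n) → ℝ} {x : EuclideanSpace ℝ (Fin n)}

local notation "𝐞" i:max => EuclideanSpace.single i (1 : ℝ)

theorem lap_eq_neg_sum_fderiv_fderiv (hf : DifferentiableAt ℝ (fderiv ℝ f) x) :
    lap f x = -∑ i, fderiv ℝ (fun y => fderiv ℝ f y (𝐞 i)) x (𝐞 i) := by
  simp [lap, iteratedFDeriv_two_apply, fderiv_clm_apply hf (differentiableAt_const _)]

theorem inner_gradient_eq_sum :
    ⟪∇ f x, ∇ g x⟫ = ∑ i, fderiv ℝ f x (𝐞 i) * fderiv ℝ g x (𝐞 i) := by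
  rw [← (EuclideanSpace.basisFun (Fin n) ℝ).sum_inner_mul_inner]
  simp [inner_gradient_left]

theorem setIntegral_lap_mul_eq_inner_gradient {Ω K : Set (EuclideanSpace ℝ (Fin n))}
    (hΩ : IsOpen Ω) (hK : IsCompact K) (hKΩ : K ⊆ Ω) (hf : ContDiffOn ℝ 2 f Ω)
    (hg : ContDiffOn ℝ 1 g Ω) (h0 : (∀ x ∉ K, f x = 0) ∨ ∀ x ∉ K, g x = 0) :
    ∫ x in K, lap f x * g x = ∫ x in K, ⟪∇ f x, ∇ g x⟫ := by
  have hdf : ContDiffOn ℝ 1 (fderiv ℝ f) Ω := hf.fderiv_of_isOpen hΩ (by norm_num)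
  have hpartial : ∀ i, ContDiffOn ℝ 1 (fun y => fderiv ℝ f y (𝐞 i)) Ω := fun i =>
    hdf.clm_apply contDiffOn_const
  have hpartial0 : ∀ i, (∀ x ∉ K, fderiv ℝ f x (𝐞 i) = 0) ∨ ∀ x ∉ K, g x = 0 := fun i =>
    h0.imp_left fun h0 x hx => by simp [fderiv_eq_zero_of_eq_zero_off hK.isClosed h0 hx]
  have hcont : ∀ {φ : EuclideanSpace ℝ (Fin n) → ℝ}, ContinuousOn φ Ω → IntegrableOn φ K :=
    fun hφ => (hφ.mono hKΩ).integrableOn_compact hK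
  have hderiv : ∀ {φ : EuclideanSpace ℝ (Fin n) → ℝ}, ContDiffOn ℝ 1 φ Ω → ∀ i,
      ContinuousOn (fun x => fderiv ℝ φ x (𝐞 i)) Ω := fun hφ i =>
    (hφ.continuousOn_fderiv_of_isOpen hΩ le_rfl).clm_apply continuousOn_const
  calc ∫ x in K, lap f x * g x
      = ∫ x in K, ∑ i, -(fderiv ℝ (fun y => fderiv ℝ f y (𝐞 i)) x (𝐞 i) * g x) := by
        refine setIntegral_congr_fun hK.measurableSet fun x hx => ?_
        rw [lap_eq_neg_sum_fderiv_fderiv ((hdf.contDiffAt (hΩ.mem_nhds (hKΩ hx))).differentiableAt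
          one_ne_zero), neg_mul, Finset.sum_mul, Finset.sum_neg_distrib]
    _ = ∑ i, ∫ x in K, fderiv ℝ f x (𝐞 i) * fderiv ℝ g x (𝐞 i) := by
        rw [integral_finsetSum _ fun i _ => ?_]
        · refine Finset.sum_congr rfl fun i _ => ?_
          rw [integral_neg, setIntegral_fderiv_mul_eq_neg hΩ hK hKΩ (hpartial i) hg (hpartial0 i),
            neg_neg]
        · exact (hcont ((hderiv (hpartial i) i).mul hg.continuousOn)).neg
    _ = ∫ x in K, ⟪∇ f x, ∇ g x⟫ := by
        simp only [inner_gradient_eq_sum]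
        rw [integral_finsetSum _ fun i _ => ?_]
        exact hcont ((hderiv (hf.of_le one_le_two) i).mul (hderiv hg i))

theorem HasCompactSupport.lap (hf : HasCompactSupport f) : HasCompactSupport (lap f) :=
  (hf.iteratedFDeriv (𝕜 := ℝ) 2).mono fun x hx h => hx (by simp [_root_.lap, h])

theorem ContDiff.continuous_lap (hf : ContDiff ℝ 2 f) : Continuous (lap f) := by
  have := hf.continuous_iteratedFDeriv (m := 2) le_rfl
  unfold _root_.lap
  fun_prop

end Laplacian

section Moser

variable {n : ℕ} {Ω K : Set (EuclideanSpace ℝ (Fin n))} {f g u η : EuclideanSpace ℝ (Fin n) → ℝ}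

theorem setIntegral_lap_mul_le (hK : IsCompact K) (hf : ContDiff ℝ 2 f)
    (hfc : HasCompactSupport f) (hg : ContinuousOn g K) (hg0 : ∀ x ∈ K, 0 ≤ g x) :
    ∫ x in K, lap f x * g x ≤ (⨆ x, |lap f x|) * ∫ x in K, g x := by
  have hbdd := hf.continuous_lap.abs.bddAbove_range_of_hasCompactSupport hfc.lap.abs
  exact setIntegral_mul_le_mul_setIntegral hK.measurableSet
    (fun x _ => (le_abs_self _).trans (le_ciSup hbdd x)) hg0
    ((hf.continuous_lap.continuousOn.mul hg).integrableOn_compact hK) (hg.integrableOn_compact hK)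

theorem setIntegral_moser_identity (hΩ : IsOpen Ω) (hK : IsCompact K) (hKΩ : K ⊆ Ω)
    (hu : ContDiffOn ℝ 2 u Ω) (hpos : ∀ x ∈ Ω, 0 < u x) (hη : ContDiff ℝ 2 η)
    (hηK : ∀ x ∉ K, η x = 0) {k : ℝ} (hk : k ≠ 0) :
    (2 * k - 1) / k ^ 2 * ∫ x in K, ‖fderiv ℝ (fun y => η y * u y ^ k) x‖ ^ 2 =
      (∫ x in K, lap u x * (η x ^ 2 * u x ^ (2 * k - 1))) +
        (2 * k - 2) / (4 * k ^ 2) * (∫ x in K, lap (fun y => η y ^ 2) x * u x ^ (2 * k)) +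
        (2 * k - 1) / k ^ 2 * ∫ x in K, ‖fderiv ℝ η x‖ ^ 2 * u x ^ (2 * k) := by
  have hu1 : ContDiffOn ℝ 1 u Ω := hu.of_le one_le_two
  have hupow : ∀ p : ℝ, ContDiffOn ℝ 1 (fun y => u y ^ p) Ω := fun p =>
    hu1.rpow_const_of_ne fun x hx => (hpos x hx).ne'
  have hη1 : ContDiffOn ℝ 1 η Ω := (hη.of_le one_le_two).contDiffOn
  have hηsq : ContDiff ℝ 2 (fun y => η y ^ 2) := hη.pow 2
  have hηsq1 : ContDiffOn ℝ 1 (fun y => η y ^ 2) Ω := (hηsq.of_le one_le_two).contDiffOn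
  have hηsqK : ∀ x ∉ K, η x ^ 2 = 0 := fun x hx => by simp [hηK x hx]
  have hΦ : ContDiffOn ℝ 1 (fun y => η y ^ 2 * u y ^ (2 * k - 1)) Ω := hηsq1.mul (hupow _)
  have hint : ∀ {φ : EuclideanSpace ℝ (Fin n) → ℝ}, ContinuousOn φ Ω → IntegrableOn φ K :=
    fun hφ => (hφ.mono hKΩ).integrableOn_compact hK
  have hA : IntegrableOn (fun x => ⟪∇ u x, ∇ (fun y => η y ^ 2 * u y ^ (2 * k - 1)) x⟫) K :=
    hint ((hu1.continuousOn_gradient hΩ).inner (hΦ.continuousOn_gradient hΩ))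
  have hB : IntegrableOn
      (fun x => ⟪∇ (fun y => η y ^ 2) x, ∇ (fun y => u y ^ (2 * k)) x⟫) K :=
    hint ((hηsq1.continuousOn_gradient hΩ).inner ((hupow _).continuousOn_gradient hΩ))
  have hC : IntegrableOn (fun x => ‖∇ η x‖ ^ 2 * u x ^ (2 * k)) K :=
    hint (((hη1.continuousOn_gradient hΩ).norm.pow 2).mul (hupow _).continuousOn)
  simp only [← norm_gradient]
  rw [setIntegral_lap_mul_eq_inner_gradient hΩ hK hKΩ hu hΦ
      (Or.inr fun x hx => by simp [hηsqK x hx]),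
    setIntegral_lap_mul_eq_inner_gradient hΩ hK hKΩ hηsq.contDiffOn (hupow _) (Or.inl hηsqK),
    ← integral_const_mul, ← integral_const_mul, ← integral_const_mul,
    ← integral_add hA (hB.const_mul _),
    ← integral_add (by exact hA.add (hB.const_mul _)) (hC.const_mul _)]
  refine setIntegral_congr_fun hK.measurableSet fun x hx => ?_
  have hxΩ := hKΩ hx
  exact moser_gradient_identity ((hη.differentiable two_ne_zero) x)
    ((hu.contDiffAt (hΩ.mem_nhds hxΩ)).differentiableAt two_ne_zero) (hpos x hxΩ) hk

theorem moser_estimate (hΩ : IsOpen Ω) (hK : IsCompact K) (hKΩ : K ⊆ Ω)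
    (hu : ContDiffOn ℝ 2 u Ω) (hpos : ∀ x ∈ Ω, 0 < u x) {q : ℝ} (hq : 2 < q)
    (hlap : ∀ x ∈ Ω, lap u x = u x ^ (q - 1)) (hη : ContDiff ℝ 2 η) (hη0 : ∀ x ∈ K, 0 ≤ η x)
    (hηK : ∀ x ∉ K, η x = 0) {k : ℝ} (hk : 1 < k) :
    (2 * k - 1) / k ^ 2 * ∫ x in K, ‖fderiv ℝ (fun y => η y * u y ^ k) x‖ ^ 2 ≤
      (∫ x in K, u x ^ q) ^ ((q - 2) / q) * (∫ x in K, (η x * u x ^ k) ^ q) ^ (2 / q) +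
      ((2 * k - 2) / (4 * k ^ 2) * (⨆ x, |lap (fun y => η y ^ 2) x|) +
          (2 * k - 1) / k ^ 2 * (⨆ x, ‖fderiv ℝ η x‖) ^ 2) * ∫ x in K, u x ^ (2 * k) := by
  have hupos : ∀ x ∈ K, 0 < u x := fun x hx => hpos x (hKΩ hx)
  have hupow : ∀ p : ℝ, ContinuousOn (fun x => u x ^ p) K := fun p =>
    (hu.continuousOn.rpow_const fun x hx => Or.inl (hpos x hx).ne').mono hKΩ
  have hu2k : ∀ x ∈ K, 0 ≤ u x ^ (2 * k) := fun x hx => Real.rpow_nonneg (hupos x hx).le _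
  have htest : ∫ x in K, lap u x * (η x ^ 2 * u x ^ (2 * k - 1)) =
      ∫ x in K, u x ^ (q - 2) * (η x * u x ^ k) ^ 2 := by
    refine setIntegral_congr_fun hK.measurableSet fun x hx => ?_
    have hux := hupos x hx
    rw [hlap x (hKΩ hx), mul_pow, ← Real.rpow_natCast (u x ^ k), ← Real.rpow_mul hux.le,
      mul_left_comm, ← Real.rpow_add hux, mul_left_comm, ← Real.rpow_add hux]
    ring_nf
  have hholder := setIntegral_rpow_mul_sq_le (μ := volume) (f := u)
    (g := fun x => η x * u x ^ k) hK hq (hu.continuousOn.mono hKΩ)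
    (hη.continuous.continuousOn.mul (hupow k)) (fun x hx => (hupos x hx).le)
    (fun x hx => mul_nonneg (hη0 x hx) (Real.rpow_nonneg (hupos x hx).le _))
  have hlap := setIntegral_lap_mul_le hK (hη.pow 2)
    (HasCompactSupport.intro hK fun x hx => by simp [hηK x hx]) (hupow (2 * k)) hu2k
  have hgrad := setIntegral_norm_fderiv_sq_mul_le (μ := volume) hK (hη.of_le one_le_two)
    (HasCompactSupport.intro hK hηK) (hupow (2 * k)) hu2k
  have hc₁ : 0 ≤ (2 * k - 2) / (4 * k ^ 2) := div_nonneg (by linarith) (by positivity)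
  have hc₂ : 0 ≤ (2 * k - 1) / k ^ 2 := div_nonneg (by linarith) (by positivity)
  rw [setIntegral_moser_identity hΩ hK hKΩ hu hpos hη hηK (by positivity), htest]
  linarith [mul_le_mul_of_nonneg_left hlap hc₁, mul_le_mul_of_nonneg_left hgrad hc₂]

end Moser

theorem two_lt_two_mul_div_sub_two_sub {n ε : ℝ} (hn : 3 ≤ n) (hε : ε ≤ 2 / (n - 2)) :
    2 < 2 * n / (n - 2) - ε := by
  have hn2 : 0 < n - 2 := by linarith
  rw [le_div_iff₀ hn2] at hε
  rw [lt_sub_iff_add_lt, lt_div_iff₀ hn2]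
  linarith

theorem stmt_9_general {n : ℕ} (hn : 3 ≤ n) (Ω : Set (EuclideanSpace ℝ (Fin n)))
    (hΩo : IsOpen Ω)
    (y₀ : EuclideanSpace ℝ (Fin n)) (μ : ℝ) (hμ : 0 < μ)
    (hball : closedBall y₀ μ ⊆ Ω)
    (η : EuclideanSpace ℝ (Fin n) → ℝ) (hηs : ContDiff ℝ (⊤ : ℕ∞) η)
    (hη0 : ∀ x, 0 ≤ η x)
    (hηout : ∀ x ∉ ball y₀ (2 * μ / 3), η x = 0)
    (k : ℝ) (hk : 1 < k) (ε : ℝ) (hε : ε ≤ 2 / ((n : ℝ) - 2))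
    (u : EuclideanSpace ℝ (Fin n) → ℝ)
    (hu : IsSolution Ω u (2 * (n : ℝ) / ((n : ℝ) - 2) - 1 - ε)) :
    (2 * k - 1) / k ^ 2 *
        ∫ x in ball y₀ (2 * μ / 3), ‖fderiv ℝ (fun y => η y * u y ^ k) x‖ ^ 2 ≤
      (∫ x in ball y₀ (2 * μ / 3), u x ^ (2 * (n : ℝ) / ((n : ℝ) - 2) - ε)) ^
          ((2 * (n : ℝ) / ((n : ℝ) - 2) - ε - 2) / (2 * (n : ℝ) / ((n : ℝ) - 2) - ε)) *
        (∫ x in ball y₀ (2 * μ / 3),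
            (η x * u x ^ k) ^ (2 * (n : ℝ) / ((n : ℝ) - 2) - ε)) ^
          (2 / (2 * (n : ℝ) / ((n : ℝ) - 2) - ε)) +
      ((2 * k - 2) / (4 * k ^ 2) * (⨆ x, |lap (fun y => η y ^ 2) x|) +
          (2 * k - 1) / k ^ 2 * (⨆ x, ‖fderiv ℝ η x‖) ^ 2) *
        ∫ x in ball y₀ (2 * μ / 3), u x ^ (2 * k) := by
  obtain ⟨hu2, -, hlapu, hpos, -⟩ := hu
  have hball_ae : ∀ f : EuclideanSpace ℝ (Fin n) → ℝ,
      ∫ x in ball y₀ (2 * μ / 3), f x = ∫ x in closedBall y₀ (2 * μ / 3), f x := fun f =>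
    setIntegral_congr_set (addHaar_ball_ae_eq_closedBall volume y₀ (by positivity))
  simp only [hball_ae]
  refine moser_estimate hΩo (isCompact_closedBall _ _)
    ((closedBall_subset_closedBall (by linarith)).trans hball) hu2 hpos
    (two_lt_two_mul_div_sub_two_sub (by exact_mod_cast hn) hε)
    (fun x hx => by rw [hlapu x hx]; ring_nf) (hηs.of_le (WithTop.coe_le_coe.2 le_top))
    (fun x _ => hη0 x) (fun x hx => hηout x fun h => hx (ball_subset_closedBall h)) hk

/-- the key Moser-iteration estimate: with `B₀ = B(y₀, 2μ/3)` and a cutoff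
`η` (`η ≡ 1` on `B(y₀, μ/2)`, `η ≡ 0` outside `B₀`),
`((2k-1)/k²)‖∇(η uᵏ)‖²_{L²(B₀)} ≤ ‖u‖^{N-ε-2}_{L^{N-ε}(B₀)} ‖η uᵏ‖²_{L^{N-ε}(B₀)}
  + C(k,η)‖u‖^{2k}_{L^{2k}(B₀)}`,
where `C(k,η) = ((2k-2)/(4k²))‖Δ(η²)‖_∞ + ((2k-1)/k²)‖∇η‖²_∞`. -/
theorem stmt_9 {n : ℕ} (hn : 3 ≤ n) (Ω : Set (EuclideanSpace ℝ (Fin n)))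
    (hΩo : IsOpen Ω) (hΩb : Bornology.IsBounded Ω) (hΩs : HasSmoothBoundary Ω)
    (y₀ : EuclideanSpace ℝ (Fin n)) (μ : ℝ) (hμ : 0 < μ)
    (hball : closedBall y₀ μ ⊆ Ω)
    (η : EuclideanSpace ℝ (Fin n) → ℝ) (hηs : ContDiff ℝ (⊤ : ℕ∞) η)
    (hη0 : ∀ x, 0 ≤ η x) (hη1 : ∀ x, η x ≤ 1)
    (hηin : ∀ x ∈ ball y₀ (μ / 2), η x = 1)
    (hηout : ∀ x ∉ ball y₀ (2 * μ / 3), η x = 0)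
    (k : ℝ) (hk : 1 < k) (ε : ℝ) (hε0 : 0 < ε) (hε : ε ≤ 2 / ((n : ℝ) - 2))
    (u : EuclideanSpace ℝ (Fin n) → ℝ)
    (hu : IsSolution Ω u (2 * (n : ℝ) / ((n : ℝ) - 2) - 1 - ε)) :
    (2 * k - 1) / k ^ 2 *
        ∫ x in ball y₀ (2 * μ / 3), ‖fderiv ℝ (fun y => η y * u y ^ k) x‖ ^ 2 ≤
      (∫ x in ball y₀ (2 * μ / 3), u x ^ (2 * (n : ℝ) / ((n : ℝ) - 2) - ε)) ^
          ((2 * (n : ℝ) / ((n : ℝ) - 2) - ε - 2) / (2 * (n : ℝ) / ((n : ℝ) - 2) - ε)) *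
        (∫ x in ball y₀ (2 * μ / 3),
            (η x * u x ^ k) ^ (2 * (n : ℝ) / ((n : ℝ) - 2) - ε)) ^
          (2 / (2 * (n : ℝ) / ((n : ℝ) - 2) - ε)) +
      ((2 * k - 2) / (4 * k ^ 2) * (⨆ x, |lap (fun y => η y ^ 2) x|) +
          (2 * k - 1) / k ^ 2 * (⨆ x, ‖fderiv ℝ η x‖) ^ 2) *
        ∫ x in ball y₀ (2 * μ / 3), u x ^ (2 * k) :=
  stmt_9_general hn Ω hΩo y₀ μ hμ hball η hηs hη0 hηout k hk ε hε u hu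
end
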